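/- arXiv:2006.15210 — 4 statements merged into one kernel-verified Lean document; each statement's English description precedes it below -/
import Mathlib

section
/- Let a ≤ b be real numbers, c ∈ [a,b], and let f be a real-valued function that is 5 times differentiable at c (e.g., analytic on an open interval containing [a,b]). Let β₁ ≠ 0 and β₂, β₃, β₄, β₅ be real numbers, let A₁,…,A₅ be defined from a, b, c, β₁,…,β₅ by the recursive formulas below, and let y₀, y₁,…,y₅ be the coefficients of 1, ε, …, ε⁵ in Λ(f)(c + β₁ε + β₂ε² + β₃ε³ + β₄ε⁴ + β₅ε⁵). Then (b−a)·y₀ + A₁y₁ + A₂y₂ + A₃y₃ + A₄y₄ + A₅y₅ = ∫ₐᵇ T₅,c(x) dx, where T₅,c is the 5th-order Taylor polynomial of f centered at c. -/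
/-- Multiplication in the 6-dimensional truncated polynomial algebra
`R⁽⁶⁾ = ℝ[ε]/(ε⁶)`, with elements represented by their coefficient tuples
`(u 0) + (u 1)ε + (u 2)ε² + (u 3)ε³ + (u 4)ε⁴ + (u 5)ε⁵`. -/
noncomputable def R6mul (u v : Fin 6 → ℝ) : Fin 6 → ℝ :=
  ![u 0 * v 0,
    u 0 * v 1 + u 1 * v 0,
    u 0 * v 2 + u 1 * v 1 + u 2 * v 0,
    u 0 * v 3 + u 1 * v 2 + u 2 * v 1 + u 3 * v 0,
    u 0 * v 4 + u 1 * v 3 + u 2 * v 2 + u 3 * v 1 + u 4 * v 0,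
    u 0 * v 5 + u 1 * v 4 + u 2 * v 3 + u 3 * v 2 + u 4 * v 1 + u 5 * v 0]

/-- The `R⁽⁶⁾`-extension `Λ(f)` of a real function `f`, evaluated at
`x + a₁ε + a₂ε² + a₃ε³ + a₄ε⁴ + a₅ε⁵` (represented as the tuple `![x,a₁,a₂,a₃,a₄,a₅]`). -/
noncomputable def Lam (f : ℝ → ℝ) (u : Fin 6 → ℝ) : Fin 6 → ℝ :=
  ![f (u 0),
    u 1 * iteratedDeriv 1 f (u 0),
    u 2 * iteratedDeriv 1 f (u 0) + (1/2) * (u 1)^2 * iteratedDeriv 2 f (u 0),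
    u 3 * iteratedDeriv 1 f (u 0) + u 1 * u 2 * iteratedDeriv 2 f (u 0)
      + (1/6) * (u 1)^3 * iteratedDeriv 3 f (u 0),
    u 4 * iteratedDeriv 1 f (u 0)
      + (u 1 * u 3 + (1/2) * (u 2)^2) * iteratedDeriv 2 f (u 0)
      + (1/2) * (u 1)^2 * u 2 * iteratedDeriv 3 f (u 0)
      + (1/24) * (u 1)^4 * iteratedDeriv 4 f (u 0),
    u 5 * iteratedDeriv 1 f (u 0)
      + (u 1 * u 4 + u 2 * u 3) * iteratedDeriv 2 f (u 0)
      + (1/2) * ((u 1)^2 * u 3 + u 1 * (u 2)^2) * iteratedDeriv 3 f (u 0)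
      + (1/6) * (u 1)^3 * u 2 * iteratedDeriv 4 f (u 0)
      + (1/120) * (u 1)^5 * iteratedDeriv 5 f (u 0)]

theorem intervalIntegral.integral_sum_mul_sub_pow (a b c : ℝ) (n : ℕ) (d : ℕ → ℝ) :
    ∫ x in a..b, ∑ i ∈ Finset.range n, d i * (x - c) ^ i
      = ∑ i ∈ Finset.range n, d i * (((b - c) ^ (i + 1) - (a - c) ^ (i + 1)) / (i + 1)) := by
  rw [intervalIntegral.integral_finsetSum fun i _ =>
    (by fun_prop : Continuous fun x => d i * (x - c) ^ i).intervalIntegrable a b]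
  refine Finset.sum_congr rfl fun i _ => ?_
  rw [intervalIntegral.integral_const_mul,
    intervalIntegral.integral_comp_sub_right (fun y => y ^ i) c, integral_pow]

/-- By Faà di Bruno, the coefficient of `f⁽ᵏ⁾(c)` in `yᵢ` is `[εⁱ] (β₁ε + ⋯ + β₅ε⁵)ᵏ / k!`, so
these are the rows `k = 1, …, 5` of the triangular system `Σᵢ Aᵢ [εⁱ] (β₁ε + ⋯ + β₅ε⁵)ᵏ / k! =
m_{k+1} / (k+1)!`, which for `mⱼ = (b - c)ʲ - (a - c)ʲ` is `∫ₐᵇ (x - c)ᵏ / k! dx`; the formulas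
for the `Aᵢ` are its back substitution. -/
theorem weights_solve_moment_system (β₁ β₂ β₃ β₄ β₅ : ℝ) (hβ₁ : β₁ ≠ 0)
    (m₂ m₃ m₄ m₅ m₆ A₁ A₂ A₃ A₄ A₅ : ℝ)
    (hA5 : A₅ = m₆ / (6 * β₁^5))
    (hA4 : A₄ = m₅ / (5 * β₁^4) - 4 * β₂ * A₅ / β₁)
    (hA3 : A₃ = m₄ / (4 * β₁^3) - 3 * β₂ * A₄ / β₁ - 3 * (β₃ / β₁ + β₂^2 / β₁^2) * A₅)
    (hA2 : A₂ = m₃ / (3 * β₁^2) - 2 * β₂ * A₃ / β₁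
      - (2 * β₃ / β₁ + β₂^2 / β₁^2) * A₄ - 2 * (β₄ / β₁ + β₂ * β₃ / β₁^2) * A₅)
    (hA1 : A₁ = m₂ / (2 * β₁) - β₂ * A₂ / β₁ - β₃ * A₃ / β₁ - β₄ * A₄ / β₁ - β₅ * A₅ / β₁) :
    β₁ * A₁ + β₂ * A₂ + β₃ * A₃ + β₄ * A₄ + β₅ * A₅ = m₂ / 2 ∧
    β₁^2 / 2 * A₂ + β₁ * β₂ * A₃ + (β₁ * β₃ + β₂^2 / 2) * A₄ + (β₁ * β₄ + β₂ * β₃) * A₅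
      = m₃ / 6 ∧
    β₁^3 / 6 * A₃ + β₁^2 * β₂ / 2 * A₄ + (β₁^2 * β₃ + β₁ * β₂^2) / 2 * A₅ = m₄ / 24 ∧
    β₁^4 / 24 * A₄ + β₁^3 * β₂ / 6 * A₅ = m₅ / 120 ∧
    β₁^5 / 120 * A₅ = m₆ / 720 := by
  subst hA1 hA2 hA3 hA4 hA5
  refine ⟨?_, ?_, ?_, ?_, ?_⟩ <;> field_simp <;> ring

theorem automatic_integration_main_general
    (a b c : ℝ)
    (f : ℝ → ℝ)
    (β₁ β₂ β₃ β₄ β₅ : ℝ) (hβ₁ : β₁ ≠ 0)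
    (A₁ A₂ A₃ A₄ A₅ : ℝ)
    (hA5 : A₅ = ((b - c)^6 - (a - c)^6) / (6 * β₁^5))
    (hA4 : A₄ = ((b - c)^5 - (a - c)^5) / (5 * β₁^4) - 4 * β₂ * A₅ / β₁)
    (hA3 : A₃ = ((b - c)^4 - (a - c)^4) / (4 * β₁^3) - 3 * β₂ * A₄ / β₁
      - 3 * (β₃ / β₁ + β₂^2 / β₁^2) * A₅)
    (hA2 : A₂ = ((b - c)^3 - (a - c)^3) / (3 * β₁^2) - 2 * β₂ * A₃ / β₁
      - (2 * β₃ / β₁ + β₂^2 / β₁^2) * A₄ - 2 * (β₄ / β₁ + β₂ * β₃ / β₁^2) * A₅)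
    (hA1 : A₁ = ((b - c)^2 - (a - c)^2) / (2 * β₁) - β₂ * A₂ / β₁ - β₃ * A₃ / β₁
      - β₄ * A₄ / β₁ - β₅ * A₅ / β₁) :
    (b - a) * Lam f ![c, β₁, β₂, β₃, β₄, β₅] 0
      + A₁ * Lam f ![c, β₁, β₂, β₃, β₄, β₅] 1
      + A₂ * Lam f ![c, β₁, β₂, β₃, β₄, β₅] 2
      + A₃ * Lam f ![c, β₁, β₂, β₃, β₄, β₅] 3
      + A₄ * Lam f ![c, β₁, β₂, β₃, β₄, β₅] 4
      + A₅ * Lam f ![c, β₁, β₂, β₃, β₄, β₅] 5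
    = ∫ x in a..b, ∑ i ∈ Finset.range 6,
        iteratedDeriv i f c / (Nat.factorial i : ℝ) * (x - c)^i := by
  obtain ⟨e₁, e₂, e₃, e₄, e₅⟩ := weights_solve_moment_system β₁ β₂ β₃ β₄ β₅ hβ₁ _ _ _ _ _
    A₁ A₂ A₃ A₄ A₅ hA5 hA4 hA3 hA2 hA1
  rw [intervalIntegral.integral_sum_mul_sub_pow a b c 6 fun i => iteratedDeriv i f c / i.factorial]
  simp only [Lam, Finset.sum_range_succ, Finset.sum_range_zero, Matrix.cons_val,
    iteratedDeriv_zero, Nat.factorial]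
  push_cast
  linear_combination iteratedDeriv 1 f c * e₁ + iteratedDeriv 2 f c * e₂
    + iteratedDeriv 3 f c * e₃ + iteratedDeriv 4 f c * e₄ + iteratedDeriv 5 f c * e₅

/-- The 5th-order automatic integration induced by `R⁽⁶⁾` computes the integral of the
5th-order Taylor polynomial: `(b−a)y₀ + Σ Aᵢyᵢ = ∫ₐᵇ T₅,c(x) dx`. -/
theorem automatic_integration_main
    (a b c : ℝ) (hab : a ≤ b) (hc : c ∈ Set.Icc a b)
    (f : ℝ → ℝ) (hf : ContDiffAt ℝ 5 f c)
    (β₁ β₂ β₃ β₄ β₅ : ℝ) (hβ₁ : β₁ ≠ 0)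
    (A₁ A₂ A₃ A₄ A₅ : ℝ)
    (hA5 : A₅ = ((b - c)^6 - (a - c)^6) / (6 * β₁^5))
    (hA4 : A₄ = ((b - c)^5 - (a - c)^5) / (5 * β₁^4) - 4 * β₂ * A₅ / β₁)
    (hA3 : A₃ = ((b - c)^4 - (a - c)^4) / (4 * β₁^3) - 3 * β₂ * A₄ / β₁
      - 3 * (β₃ / β₁ + β₂^2 / β₁^2) * A₅)
    (hA2 : A₂ = ((b - c)^3 - (a - c)^3) / (3 * β₁^2) - 2 * β₂ * A₃ / β₁
      - (2 * β₃ / β₁ + β₂^2 / β₁^2) * A₄ - 2 * (β₄ / β₁ + β₂ * β₃ / β₁^2) * A₅)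
    (hA1 : A₁ = ((b - c)^2 - (a - c)^2) / (2 * β₁) - β₂ * A₂ / β₁ - β₃ * A₃ / β₁
      - β₄ * A₄ / β₁ - β₅ * A₅ / β₁) :
    (b - a) * Lam f ![c, β₁, β₂, β₃, β₄, β₅] 0
      + A₁ * Lam f ![c, β₁, β₂, β₃, β₄, β₅] 1
      + A₂ * Lam f ![c, β₁, β₂, β₃, β₄, β₅] 2
      + A₃ * Lam f ![c, β₁, β₂, β₃, β₄, β₅] 3
      + A₄ * Lam f ![c, β₁, β₂, β₃, β₄, β₅] 4
      + A₅ * Lam f ![c, β₁, β₂, β₃, β₄, β₅] 5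
    = ∫ x in a..b, ∑ i ∈ Finset.range 6,
        iteratedDeriv i f c / (Nat.factorial i : ℝ) * (x - c)^i :=
  automatic_integration_main_general a b c f β₁ β₂ β₃ β₄ β₅ hβ₁ A₁ A₂ A₃ A₄ A₅ hA5 hA4 hA3 hA2 hA1
end

section
/- Let x ∈ ℝ and let f, g be real-valued functions that are 5 times continuously differentiable on an open set containing x. Then for all real numbers a₁, a₂, a₃, a₄, a₅, with u := x + a₁ε + a₂ε² + a₃ε³ + a₄ε⁴ + a₅ε⁵ ∈ R⁽⁶⁾, the R⁽⁶⁾-extension preserves products: Λ(f·g)(u) = Λ(f)(u) · Λ(g)(u) in R⁽⁶⁾. -/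
open Finset in
theorem iteratedDeriv_fun_mul_of_le {𝕜 𝔸 : Type*} [NontriviallyNormedField 𝕜]
    [NormedRing 𝔸] [NormedAlgebra 𝕜 𝔸] {f g : 𝕜 → 𝔸} {x : 𝕜} {n k : ℕ}
    (hf : ContDiffAt 𝕜 n f x) (hg : ContDiffAt 𝕜 n g x) (hk : k ≤ n) :
    iteratedDeriv k (fun t => f t * g t) x = ∑ i ∈ range (k + 1),
      k.choose i * iteratedDeriv i f x * iteratedDeriv (k - i) g x :=
  iteratedDeriv_fun_mul (hf.of_le (by exact_mod_cast hk)) (hg.of_le (by exact_mod_cast hk))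

/-- The `R⁽⁶⁾`-extension preserves products: `Λ(f·g)(u) = Λ(f)(u) · Λ(g)(u)`. -/
theorem Lam_mul (x : ℝ) (f g : ℝ → ℝ)
    (hf : ContDiffAt ℝ 5 f x) (hg : ContDiffAt ℝ 5 g x)
    (a₁ a₂ a₃ a₄ a₅ : ℝ) :
    Lam (fun t => f t * g t) ![x, a₁, a₂, a₃, a₄, a₅]
      = R6mul (Lam f ![x, a₁, a₂, a₃, a₄, a₅]) (Lam g ![x, a₁, a₂, a₃, a₄, a₅]) := by
  have leibniz (k : ℕ) (hk : k ≤ 5) := iteratedDeriv_fun_mul_of_le hf hg hk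
  have h₁ := leibniz 1 (by norm_num)
  have h₂ := leibniz 2 (by norm_num)
  have h₃ := leibniz 3 (by norm_num)
  have h₄ := leibniz 4 (by norm_num)
  have h₅ := leibniz 5 (by norm_num)
  simp only [Finset.sum_range_succ, Finset.sum_range_zero, iteratedDeriv_zero] at h₁ h₂ h₃ h₄ h₅
  norm_num [Nat.choose] at h₁ h₂ h₃ h₄ h₅
  funext i
  fin_cases i <;> simp [Lam, R6mul, h₁, h₂, h₃, h₄, h₅] <;> ring
end

section
/- Let x ∈ ℝ, let g be 5 times continuously differentiable on an open set containing x, and let f be 5 times continuously differentiable on an open set containing g(x). Then for all real numbers a₁, a₂, a₃, a₄, a₅, with u := x + a₁ε + a₂ε² + a₃ε³ + a₄ε⁴ + a₅ε⁵ ∈ R⁽⁶⁾, the R⁽⁶⁾-extension preserves composition: Λ(f∘g)(u) = Λ(f)(Λ(g)(u)). -/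
open Filter Topology

section IteratedDeriv

variable {𝕜 F : Type*} [NontriviallyNormedField 𝕜] [NormedAddCommGroup F] [NormedSpace 𝕜 F]
  {f : 𝕜 → F} {x : 𝕜}

theorem ContDiffAt.differentiableAt_iteratedDeriv {n : WithTop ℕ∞} {m : ℕ}
    (h : ContDiffAt 𝕜 n f x) (hmn : m < n) : DifferentiableAt 𝕜 (iteratedDeriv m f) x := by
  simpa only [iteratedDerivWithin_univ, differentiableWithinAt_univ] using
    h.contDiffWithinAt.differentiableWithinAt_iteratedDerivWithin (s := Set.univ) hmn
      (by simp [uniqueDiffOn_univ])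

theorem ContDiffAt.eventually_hasDerivAt_iteratedDeriv {n : ℕ} (h : ContDiffAt 𝕜 n f x) :
    ∀ᶠ y in 𝓝 x, ∀ k < n, HasDerivAt (iteratedDeriv k f) (iteratedDeriv (k + 1) f y) y := by
  filter_upwards [h.eventually (by simp)] with y hy k hk
  rw [iteratedDeriv_succ]
  exact (hy.differentiableAt_iteratedDeriv (by exact_mod_cast hk)).hasDerivAt

theorem Filter.EventuallyEq.iteratedDeriv_succ_of_hasDerivAt {G G' : 𝕜 → F} {n : ℕ}
    (h : iteratedDeriv n f =ᶠ[𝓝 x] G) (hG : ∀ᶠ y in 𝓝 x, HasDerivAt G (G' y) y) :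
    iteratedDeriv (n + 1) f =ᶠ[𝓝 x] G' := by
  rw [iteratedDeriv_succ]
  exact h.deriv.trans (hG.mono fun _ hy => hy.deriv)

end IteratedDeriv

section FaaDiBruno

variable {𝕜 : Type*} [NontriviallyNormedField 𝕜] (f g : 𝕜 → 𝕜)

noncomputable def faaDiBruno₁ (y : 𝕜) : 𝕜 :=
  iteratedDeriv 1 f (g y) * iteratedDeriv 1 g y

noncomputable def faaDiBruno₂ (y : 𝕜) : 𝕜 :=
  iteratedDeriv 2 f (g y) * iteratedDeriv 1 g y ^ 2
    + iteratedDeriv 1 f (g y) * iteratedDeriv 2 g y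

noncomputable def faaDiBruno₃ (y : 𝕜) : 𝕜 :=
  iteratedDeriv 3 f (g y) * iteratedDeriv 1 g y ^ 3
    + 3 * (iteratedDeriv 2 f (g y) * (iteratedDeriv 1 g y * iteratedDeriv 2 g y))
    + iteratedDeriv 1 f (g y) * iteratedDeriv 3 g y

noncomputable def faaDiBruno₄ (y : 𝕜) : 𝕜 :=
  iteratedDeriv 4 f (g y) * iteratedDeriv 1 g y ^ 4
    + 6 * (iteratedDeriv 3 f (g y) * (iteratedDeriv 1 g y ^ 2 * iteratedDeriv 2 g y))
    + 3 * (iteratedDeriv 2 f (g y) * iteratedDeriv 2 g y ^ 2)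
    + 4 * (iteratedDeriv 2 f (g y) * (iteratedDeriv 1 g y * iteratedDeriv 3 g y))
    + iteratedDeriv 1 f (g y) * iteratedDeriv 4 g y

noncomputable def faaDiBruno₅ (y : 𝕜) : 𝕜 :=
  iteratedDeriv 5 f (g y) * iteratedDeriv 1 g y ^ 5
    + 10 * (iteratedDeriv 4 f (g y) * (iteratedDeriv 1 g y ^ 3 * iteratedDeriv 2 g y))
    + 15 * (iteratedDeriv 3 f (g y) * (iteratedDeriv 1 g y * iteratedDeriv 2 g y ^ 2))
    + 10 * (iteratedDeriv 3 f (g y) * (iteratedDeriv 1 g y ^ 2 * iteratedDeriv 3 g y))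
    + 10 * (iteratedDeriv 2 f (g y) * (iteratedDeriv 2 g y * iteratedDeriv 3 g y))
    + 5 * (iteratedDeriv 2 f (g y) * (iteratedDeriv 1 g y * iteratedDeriv 4 g y))
    + iteratedDeriv 1 f (g y) * iteratedDeriv 5 g y

variable {f g}

section

variable {y : 𝕜} {m : ℕ}
  (hf : ∀ k ≤ m, HasDerivAt (fun z => iteratedDeriv k f (g z))
    (iteratedDeriv (k + 1) f (g y) * iteratedDeriv 1 g y) y)
  (hg : ∀ k ≤ m, HasDerivAt (iteratedDeriv k g) (iteratedDeriv (k + 1) g y) y)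
include hf

theorem hasDerivAt_comp_faaDiBruno₁ : HasDerivAt (f ∘ g) (faaDiBruno₁ f g y) y := by
  have h := hf 0 m.zero_le
  rw [iteratedDeriv_zero, zero_add] at h
  exact h

include hg

theorem hasDerivAt_faaDiBruno₁ (hm : 1 ≤ m) :
    HasDerivAt (faaDiBruno₁ f g) (faaDiBruno₂ f g y) y := by
  refine ((hf 1 hm).mul (hg 1 hm)).congr_deriv ?_
  simp only [faaDiBruno₂]
  ring

theorem hasDerivAt_faaDiBruno₂ (hm : 2 ≤ m) :
    HasDerivAt (faaDiBruno₂ f g) (faaDiBruno₃ f g y) y := by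
  refine (((hf 2 hm).mul ((hg 1 (by omega)).pow 2)).add
    ((hf 1 (by omega)).mul (hg 2 hm))).congr_deriv ?_
  simp only [faaDiBruno₃, Pi.pow_apply]
  ring

theorem hasDerivAt_faaDiBruno₃ (hm : 3 ≤ m) :
    HasDerivAt (faaDiBruno₃ f g) (faaDiBruno₄ f g y) y := by
  refine ((((hf 3 hm).mul ((hg 1 (by omega)).pow 3)).add
    (((hf 2 (by omega)).mul ((hg 1 (by omega)).mul (hg 2 (by omega)))).const_mul 3)).add
    ((hf 1 (by omega)).mul (hg 3 hm))).congr_deriv ?_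
  simp only [faaDiBruno₄, Pi.pow_apply, Pi.mul_apply]
  ring

theorem hasDerivAt_faaDiBruno₄ (hm : 4 ≤ m) :
    HasDerivAt (faaDiBruno₄ f g) (faaDiBruno₅ f g y) y := by
  refine ((((((hf 4 hm).mul ((hg 1 (by omega)).pow 4)).add
    (((hf 3 (by omega)).mul (((hg 1 (by omega)).pow 2).mul (hg 2 (by omega)))).const_mul 6)).add
    (((hf 2 (by omega)).mul ((hg 2 (by omega)).pow 2)).const_mul 3)).add
    (((hf 2 (by omega)).mul ((hg 1 (by omega)).mul (hg 3 (by omega)))).const_mul 4)).add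
    ((hf 1 (by omega)).mul (hg 4 hm))).congr_deriv ?_
  simp only [faaDiBruno₅, Pi.pow_apply, Pi.mul_apply]
  ring

end

theorem iteratedDeriv_comp_eq_faaDiBruno {x : 𝕜} (hg : ContDiffAt 𝕜 5 g x)
    (hf : ContDiffAt 𝕜 5 f (g x)) :
    iteratedDeriv 1 (f ∘ g) x = faaDiBruno₁ f g x ∧ iteratedDeriv 2 (f ∘ g) x = faaDiBruno₂ f g x ∧
    iteratedDeriv 3 (f ∘ g) x = faaDiBruno₃ f g x ∧ iteratedDeriv 4 (f ∘ g) x = faaDiBruno₄ f g x ∧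
    iteratedDeriv 5 (f ∘ g) x = faaDiBruno₅ f g x := by
  have hderiv : ∀ᶠ y in 𝓝 x,
      (∀ k ≤ 4, HasDerivAt (fun z => iteratedDeriv k f (g z))
        (iteratedDeriv (k + 1) f (g y) * iteratedDeriv 1 g y) y) ∧
      ∀ k ≤ 4, HasDerivAt (iteratedDeriv k g) (iteratedDeriv (k + 1) g y) y := by
    filter_upwards [hg.eventually_hasDerivAt_iteratedDeriv,
      hg.continuousAt.tendsto.eventually hf.eventually_hasDerivAt_iteratedDeriv] with y hgy hfy
    have hg₁ : HasDerivAt g (iteratedDeriv 1 g y) y := by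
      simpa only [iteratedDeriv_zero] using hgy 0 (by norm_num)
    exact ⟨fun k hk => (hfy k (by omega)).comp y hg₁, fun k hk => hgy k (by omega)⟩
  have e₁ : iteratedDeriv 1 (f ∘ g) =ᶠ[𝓝 x] faaDiBruno₁ f g :=
    (EventuallyEq.of_eq iteratedDeriv_zero).iteratedDeriv_succ_of_hasDerivAt
      (hderiv.mono fun _ hy => hasDerivAt_comp_faaDiBruno₁ hy.1)
  have e₂ := e₁.iteratedDeriv_succ_of_hasDerivAt
    (hderiv.mono fun _ hy => hasDerivAt_faaDiBruno₁ hy.1 hy.2 (by norm_num))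
  have e₃ := e₂.iteratedDeriv_succ_of_hasDerivAt
    (hderiv.mono fun _ hy => hasDerivAt_faaDiBruno₂ hy.1 hy.2 (by norm_num))
  have e₄ := e₃.iteratedDeriv_succ_of_hasDerivAt
    (hderiv.mono fun _ hy => hasDerivAt_faaDiBruno₃ hy.1 hy.2 (by norm_num))
  have e₅ := e₄.iteratedDeriv_succ_of_hasDerivAt
    (hderiv.mono fun _ hy => hasDerivAt_faaDiBruno₄ hy.1 hy.2 le_rfl)
  exact ⟨e₁.eq_of_nhds, e₂.eq_of_nhds, e₃.eq_of_nhds, e₄.eq_of_nhds, e₅.eq_of_nhds⟩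

end FaaDiBruno

/-- The `R⁽⁶⁾`-extension preserves composition: `Λ(f∘g)(u) = Λ(f)(Λ(g)(u))`. -/
theorem Lam_comp (x : ℝ) (g f : ℝ → ℝ)
    (hg : ContDiffAt ℝ 5 g x) (hf : ContDiffAt ℝ 5 f (g x))
    (a₁ a₂ a₃ a₄ a₅ : ℝ) :
    Lam (f ∘ g) ![x, a₁, a₂, a₃, a₄, a₅]
      = Lam f (Lam g ![x, a₁, a₂, a₃, a₄, a₅]) := by
  obtain ⟨h₁, h₂, h₃, h₄, h₅⟩ := iteratedDeriv_comp_eq_faaDiBruno hg hf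
  ext i
  fin_cases i <;>
    simp only [Lam, Fin.zero_eta, Fin.mk_one, Fin.reduceFinMk, Fin.isValue, Matrix.cons_val_zero,
      Matrix.cons_val_one, Matrix.cons_val, Function.comp_apply, h₁, h₂, h₃, h₄, h₅, faaDiBruno₁,
      faaDiBruno₂, faaDiBruno₃, faaDiBruno₄, faaDiBruno₅] <;>
    ring
end

section
/- Let x ∈ ℝ, let g be 5 times continuously differentiable on an open set containing x and f be 5 times continuously differentiable on an open set containing g(x), let a₁,…,a₅ ∈ ℝ and u := x + a₁ε + a₂ε² + a₃ε³ + a₄ε⁴ + a₅ε⁵ ∈ R⁽⁶⁾. Then in Λ(f)(Λ(g)(u)): the coefficient of ε equals a₁(f∘g)'(x); the coefficient of ε² equals a₂(f∘g)'(x) + (1/2)a₁²(f∘g)''(x); and the coefficient of ε³ equals a₃(f∘g)'(x) + a₁a₂(f∘g)''(x) + (1/6)a₁³(f∘g)'''(x). -/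
open Filter Topology

section

variable {𝕜 F : Type*} [NontriviallyNormedField 𝕜] [NormedAddCommGroup F] [NormedSpace 𝕜 F]
  {f g : 𝕜 → 𝕜} {x : 𝕜}

theorem ContDiffAt.hasDerivAt_iteratedDeriv {h : 𝕜 → F} {k n : ℕ} (hh : ContDiffAt 𝕜 n h x)
    (hk : k < n) : HasDerivAt (iteratedDeriv k h) (iteratedDeriv (k + 1) h x) x := by
  induction k generalizing h n with
  | zero => simpa using (hh.differentiableAt (by exact_mod_cast hk.ne')).hasDerivAt
  | succ k ih =>
    obtain ⟨m, rfl⟩ : ∃ m, n = m + 1 := ⟨n - 1, by omega⟩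
    rw [iteratedDeriv_succ', iteratedDeriv_succ' (n := k + 1)]
    exact ih (hh.derivWithin (m := m) (by simp)) (by omega)

theorem eventually_contDiffAt_comp {n : ℕ} (hg : ContDiffAt 𝕜 n g x)
    (hf : ContDiffAt 𝕜 n f (g x)) : ∀ᶠ y in 𝓝 x, ContDiffAt 𝕜 n g y ∧ ContDiffAt 𝕜 n f (g y) :=
  (hg.eventually (by simp)).and (hg.continuousAt.eventually (hf.eventually (by simp)))

theorem deriv_comp_eventuallyEq (hg : ContDiffAt 𝕜 1 g x) (hf : ContDiffAt 𝕜 1 f (g x)) :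
    deriv (f ∘ g) =ᶠ[𝓝 x] fun y ↦ deriv f (g y) * deriv g y := by
  filter_upwards [eventually_contDiffAt_comp (n := 1) hg hf] with y ⟨hgy, hfy⟩
  exact deriv_comp y (hfy.differentiableAt one_ne_zero) (hgy.differentiableAt one_ne_zero)

theorem iteratedDeriv_two_comp_eventuallyEq (hg : ContDiffAt 𝕜 2 g x)
    (hf : ContDiffAt 𝕜 2 f (g x)) :
    iteratedDeriv 2 (f ∘ g) =ᶠ[𝓝 x]
      fun y ↦ iteratedDeriv 2 f (g y) * deriv g y ^ 2 + deriv f (g y) * iteratedDeriv 2 g y := by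
  filter_upwards [eventually_contDiffAt_comp (n := 2) hg hf] with y ⟨hgy, hfy⟩
  have hf' := hfy.hasDerivAt_iteratedDeriv one_lt_two
  have hg' := hgy.hasDerivAt_iteratedDeriv one_lt_two
  rw [iteratedDeriv_one] at hf' hg'
  rw [iteratedDeriv_succ, iteratedDeriv_one,
    (deriv_comp_eventuallyEq (hgy.of_le one_le_two) (hfy.of_le one_le_two)).deriv_eq]
  exact ((hf'.comp y (hgy.differentiableAt two_ne_zero).hasDerivAt).mul hg').deriv.trans
    (by simp only [Function.comp_apply]; ring)

theorem iteratedDeriv_two_comp (hg : ContDiffAt 𝕜 2 g x) (hf : ContDiffAt 𝕜 2 f (g x)) :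
    iteratedDeriv 2 (f ∘ g) x
      = iteratedDeriv 2 f (g x) * deriv g x ^ 2 + deriv f (g x) * iteratedDeriv 2 g x :=
  (iteratedDeriv_two_comp_eventuallyEq hg hf).eq_of_nhds

theorem iteratedDeriv_three_comp (hg : ContDiffAt 𝕜 3 g x) (hf : ContDiffAt 𝕜 3 f (g x)) :
    iteratedDeriv 3 (f ∘ g) x = iteratedDeriv 3 f (g x) * deriv g x ^ 3
      + 3 * iteratedDeriv 2 f (g x) * deriv g x * iteratedDeriv 2 g x
      + deriv f (g x) * iteratedDeriv 3 g x := by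
  have hg₁ := hg.hasDerivAt_iteratedDeriv (k := 0) (by norm_num)
  have hg₂ := hg.hasDerivAt_iteratedDeriv (k := 1) (by norm_num)
  have hg₃ := hg.hasDerivAt_iteratedDeriv (k := 2) (by norm_num)
  have hf₂ := hf.hasDerivAt_iteratedDeriv (k := 1) (by norm_num)
  have hf₃ := hf.hasDerivAt_iteratedDeriv (k := 2) (by norm_num)
  simp only [iteratedDeriv_zero, iteratedDeriv_one, zero_add] at hg₁ hg₂ hf₂
  rw [iteratedDeriv_succ, (iteratedDeriv_two_comp_eventuallyEq (hg.of_le (by norm_num))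
    (hf.of_le (by norm_num))).deriv_eq]
  exact (((hf₃.comp x hg₁).mul (hg₂.pow 2)).add ((hf₂.comp x hg₁).mul hg₃)).deriv.trans
    (by simp only [Function.comp_apply, Pi.pow_apply]; ring)

end

/-- Coefficients of ε, ε², ε³ in `Λ(f)(Λ(g)(u))` are given by the derivatives of
the composition `f ∘ g`. -/
theorem comp_coeff_low (x : ℝ) (g f : ℝ → ℝ)
    (hg : ContDiffAt ℝ 5 g x) (hf : ContDiffAt ℝ 5 f (g x))
    (a₁ a₂ a₃ a₄ a₅ : ℝ) :
    Lam f (Lam g ![x, a₁, a₂, a₃, a₄, a₅]) 1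
        = a₁ * iteratedDeriv 1 (f ∘ g) x ∧
    Lam f (Lam g ![x, a₁, a₂, a₃, a₄, a₅]) 2
        = a₂ * iteratedDeriv 1 (f ∘ g) x + (1/2) * a₁^2 * iteratedDeriv 2 (f ∘ g) x ∧
    Lam f (Lam g ![x, a₁, a₂, a₃, a₄, a₅]) 3
        = a₃ * iteratedDeriv 1 (f ∘ g) x + a₁ * a₂ * iteratedDeriv 2 (f ∘ g) x
          + (1/6) * a₁^3 * iteratedDeriv 3 (f ∘ g) x := by
  have hg₃ : ContDiffAt ℝ 3 g x := hg.of_le (by norm_num)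
  have hf₃ : ContDiffAt ℝ 3 f (g x) := hf.of_le (by norm_num)
  rw [iteratedDeriv_one, deriv_comp x (hf₃.differentiableAt (by norm_num))
    (hg₃.differentiableAt (by norm_num)), iteratedDeriv_two_comp (hg₃.of_le (by norm_num))
    (hf₃.of_le (by norm_num)), iteratedDeriv_three_comp hg₃ hf₃]
  refine ⟨?_, ?_, ?_⟩ <;>
    simp only [Lam, iteratedDeriv_one, Matrix.cons_val_zero, Matrix.cons_val_one,
      Matrix.cons_val_two, Matrix.cons_val_three, Matrix.head_cons, Matrix.tail_cons] <;>
    ring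
end
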